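/- Every 2-decomposition tree of an n-element set with n ≥ 3 has at most 8n − 17 nodes. (In particular, for an n-vertex chain-decomposable bipartite graph G with n ≥ 3, any decomposition tree of G — which is a 2-decomposition tree of V(G) — has at most 8n − 17 nodes.) -/

import Mathlib

universe u

/-- A rooted binary tree in which every node `v` carries a finite set label `S(v)`
and every internal node has exactly two children. -/
inductive STree (α : Type u) : Type u where
  | leaf (s : Finset α) : STree α
  | node (s : Finset α) (l r : STree α) : STree α

namespace STree

/-- The label `S(v)` of the root of the (sub)tree. -/
def label {α : Type u} : STree α → Finset α
  | leaf s => s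
  | node s _ _ => s

/-- The number of leaves of the tree. -/
def numLeaves {α : Type u} : STree α → ℕ
  | leaf _ => 1
  | node _ l r => l.numLeaves + r.numLeaves

/-- The total number of nodes of the tree. -/
def numNodes {α : Type u} : STree α → ℕ
  | leaf _ => 1
  | node _ l r => l.numNodes + r.numNodes + 1

/-- The local conditions of a `k`-decomposition tree: leaves are exactly the nodes whose
label is a singleton, and whenever `v₁, v₂` are the two children of `v` we have
`S(v₁) ∪ S(v₂) = S(v)`, `|S(v)| ≤ |S(v₁)| + |S(v₂)| ≤ |S(v)| + k`, and each of
`S(v₁) ∖ S(v₂)` and `S(v₂) ∖ S(v₁)` is non-empty. -/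
def Valid {α : Type u} [DecidableEq α] (k : ℕ) : STree α → Prop
  | leaf s => s.card = 1
  | node s l r =>
      s.card ≠ 1 ∧
      l.label ∪ r.label = s ∧
      s.card ≤ l.label.card + r.label.card ∧
      l.label.card + r.label.card ≤ s.card + k ∧
      (l.label \ r.label).Nonempty ∧ (r.label \ l.label).Nonempty ∧
      l.Valid k ∧ r.Valid k

/-- No node of the tree has label `A`. -/
def NoLabel {α : Type u} (A : Finset α) : STree α → Prop
  | leaf s => s ≠ A
  | node s l r => s ≠ A ∧ l.NoLabel A ∧ r.NoLabel A

/-- No node other than the root has label `A`. -/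
def NoLabelBelowRoot {α : Type u} (A : Finset α) : STree α → Prop
  | leaf _ => True
  | node _ l r => l.NoLabel A ∧ r.NoLabel A

end STree

/-- `T` is a `k`-decomposition tree of the finite set `A`:  the root (and only the root)
is labelled by `A`, leaves are exactly the nodes labelled by singletons, and the labels of
the two children of any internal node `v` cover `S(v)`, satisfy
`|S(v)| ≤ |S(v₁)| + |S(v₂)| ≤ |S(v)| + k`, and each has a private element. -/
def IsKDecompTree {α : Type u} [DecidableEq α] (k : ℕ) (A : Finset α) (T : STree α) : Prop :=
  T.label = A ∧ T.Valid k ∧ T.NoLabelBelowRoot A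


/-! A subtree whose root label has `m` elements has at most `m` leaves if `m ≤ 2` and at most
`4m - 8` leaves if `m ≥ 3`. This bound is superadditive along every split a `2`-decomposition tree
allows: both children are strictly smaller than their parent and their sizes add up to at most
`m + 2`, an excess that the `- 8` absorbs. A binary tree with `L` leaves has `2L - 1` nodes. -/

theorem Finset.card_lt_card_union_left {α : Type u} [DecidableEq α] {s t : Finset α}
    (h : (t \ s).Nonempty) : s.card < (s ∪ t).card :=
  Finset.card_lt_card (left_lt_sup.2 (Finset.sdiff_nonempty.1 h))

theorem Finset.card_lt_card_union_right {α : Type u} [DecidableEq α] {s t : Finset α}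
    (h : (s \ t).Nonempty) : t.card < (s ∪ t).card :=
  Finset.card_lt_card (right_lt_sup.2 (Finset.sdiff_nonempty.1 h))

def leafBound (n : ℕ) : ℕ := if n ≤ 2 then n else 4 * n - 8

theorem leafBound_add_le {a b n : ℕ} (han : a < n) (hbn : b < n) (hab : a + b ≤ n + 2) :
    leafBound a + leafBound b ≤ leafBound n := by
  unfold leafBound
  split_ifs <;> omega

namespace STree

variable {α : Type u}

theorem numNodes_add_one (T : STree α) : T.numNodes + 1 = 2 * T.numLeaves := by
  induction T with
  | leaf s => rfl
  | node s l r hl hr => simp only [numNodes, numLeaves]; omega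

variable [DecidableEq α] {k : ℕ}

theorem Valid.numLeaves_le_leafBound (hk : k ≤ 2) {T : STree α} (h : T.Valid k) :
    T.numLeaves ≤ leafBound T.label.card := by
  induction T with
  | leaf s => simp only [Valid] at h; simp [numLeaves, label, h, leafBound]
  | node s l r ihl ihr =>
    obtain ⟨-, rfl, -, hsum, hl_priv, hr_priv, hl, hr⟩ := h
    calc (node (l.label ∪ r.label) l r).numLeaves = l.numLeaves + r.numLeaves := rfl
      _ ≤ leafBound l.label.card + leafBound r.label.card := add_le_add (ihl hl) (ihr hr)
      _ ≤ leafBound (l.label ∪ r.label).card :=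
        leafBound_add_le (Finset.card_lt_card_union_left hr_priv)
          (Finset.card_lt_card_union_right hl_priv) (by omega)

end STree

/-- Every `2`-decomposition tree of an `n`-element set with `n ≥ 3` has
at most `8 * n - 17` nodes. -/
theorem twoDecompTree_numNodes_le {α : Type u} [DecidableEq α] (A : Finset α)
    (T : STree α) (hT : IsKDecompTree 2 A T) (hn : 3 ≤ A.card) :
    T.numNodes ≤ 8 * A.card - 17 := by
  obtain ⟨rfl, hvalid, -⟩ := hT
  have hleaves := hvalid.numLeaves_le_leafBound le_rfl
  have hbound : leafBound T.label.card = 4 * T.label.card - 8 := if_neg (by omega)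
  have hnodes := T.numNodes_add_one
  omega
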